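/- arXiv:1506.07903 — 5 statements merged into one kernel-verified Lean document; each statement's English description precedes it below -/
import Mathlib

section
/- Let Q = [a, a+h] × [b, b+h] be a square in ℝ², and let S = {(a + i·h/2, b + j·h/2) : i, j ∈ {-1, 0, 1, 2, 3}} be its set of 25 sentinel points. Then any closed axis-aligned square Q' of side length h/2 that intersects Q contains at least one sentinel point of S. -/
/-!
The problem splits into the two coordinates. If `[c, c + h/2]` meets `[a, a + h]` then
`c - a ∈ [-h/2, h]`, and rounding `(c - a) / (h/2)` up to an integer `i ∈ [-1, 2]` gives a grid
point `a + i·h/2` in `[c, c + h/2]`.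
-/

open Metric

/-- An axis-aligned square [a,a+h] × [b,b+h] in the Euclidean plane. -/
def square (a b h : ℝ) : Set (EuclideanSpace ℝ (Fin 2)) :=
  {p | p 0 ∈ Set.Icc a (a + h) ∧ p 1 ∈ Set.Icc b (b + h)}

open Set

lemma exists_int_mul_mem_Icc {δ t : ℝ} (hδ : 0 < δ) {m n : ℤ} (hm : m * δ ≤ t)
    (hn : t ≤ n * δ) : ∃ i : ℤ, m ≤ i ∧ i ≤ n ∧ i * δ ∈ Icc t (t + δ) := by
  have hceil_lt : (⌈t / δ⌉ : ℝ) < t / δ + 1 := Int.ceil_lt_add_one _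
  refine ⟨⌈t / δ⌉, ?_, Int.ceil_le.2 ((div_le_iff₀ hδ).2 hn), ?_, ?_⟩
  · exact Int.cast_le.1 (((le_div_iff₀ hδ).2 hm).trans (Int.le_ceil _))
  · exact (div_le_iff₀ hδ).1 (Int.le_ceil _)
  · rw [div_add_one hδ.ne'] at hceil_lt
    exact ((lt_div_iff₀ hδ).1 hceil_lt).le

lemma exists_sentinel_mem_Icc_of_inter_nonempty {a c h : ℝ} (hh : 0 < h)
    (hint : (Icc c (c + h / 2) ∩ Icc a (a + h)).Nonempty) :
    ∃ i : ℤ, -1 ≤ i ∧ i ≤ 2 ∧ a + i * (h / 2) ∈ Icc c (c + h / 2) := by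
  obtain ⟨x, ⟨hcx, hxc⟩, ⟨hax, hxa⟩⟩ := hint
  obtain ⟨i, hi_low, hi_up, h_lo, h_hi⟩ :=
    exists_int_mul_mem_Icc (t := c - a) (m := -1) (n := 2) (half_pos hh)
      (by push_cast; linarith) (by push_cast; linarith)
  exact ⟨i, hi_low, hi_up, by linarith, by linarith⟩

/-- Any closed axis-aligned square of side h/2 that intersects
Q = [a,a+h] × [b,b+h] contains one of the 25 sentinel points
(a + i·h/2, b + j·h/2), i, j ∈ {-1,0,1,2,3}. -/
theorem stmt_6 (a b h c d : ℝ) (hh : 0 < h)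
    (hint : (square c d (h / 2) ∩ square a b h).Nonempty) :
    ∃ p ∈ square c d (h / 2), ∃ i j : ℤ,
      -1 ≤ i ∧ i ≤ 3 ∧ -1 ≤ j ∧ j ≤ 3 ∧
      p 0 = a + i * (h / 2) ∧ p 1 = b + j * (h / 2) := by
  obtain ⟨q, ⟨hqc₀, hqc₁⟩, ⟨hqa₀, hqa₁⟩⟩ := hint
  obtain ⟨i, hi_low, hi_up, hi⟩ := exists_sentinel_mem_Icc_of_inter_nonempty hh ⟨q 0, hqc₀, hqa₀⟩
  obtain ⟨j, hj_low, hj_up, hj⟩ := exists_sentinel_mem_Icc_of_inter_nonempty hh ⟨q 1, hqc₁, hqa₁⟩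
  exact ⟨!₂[a + i * (h / 2), b + j * (h / 2)], ⟨by simpa using hi, by simpa using hj⟩,
    i, j, hi_low, by omega, hj_low, by omega, by simp, by simp⟩
end

section
/- Let D be a closed disk in ℝ² and Q = [a, a+h] × [b, b+h] a square with D ∩ Q ≠ ∅ and diam(Q) ≤ 2·diam(D). Then D contains at least one of the 25 sentinel points {(a + i·h/2, b + j·h/2) : i, j ∈ {-1, 0, 1, 2, 3}}. -/
open Metric

/-!
Project the disk centre `c` onto each axis separately. If a coordinate of `c` lies within
`3h/4` of the side `[a, a + h]`, the nearest of the five sentinel abscissae is at most `h/4`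
away from it; otherwise the outermost sentinel lies between `c` and the square, at least `h/2`
closer to `c` than the corresponding coordinate of a point `q ∈ D ∩ Q`, which saves `h²/4` in
the squared distance. As `diam Q ≤ 2 diam D` means `h² ≤ 8ρ²`, in each of the three resulting
cases the sentinel built from the two chosen coordinates is within `ρ` of `c`.
-/

lemma EuclideanSpace.dist_sq_eq_fin_two (p q : EuclideanSpace ℝ (Fin 2)) :
    dist p q ^ 2 = (p 0 - q 0) ^ 2 + (p 1 - q 1) ^ 2 := by
  simp [EuclideanSpace.dist_sq_eq, Fin.sum_univ_two, Real.dist_eq, sq_abs]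

lemma isBounded_square (a b h : ℝ) : Bornology.IsBounded (square a b h) := by
  refine (isBounded_closedBall (x := !₂[a, b]) (r := 2 * h)).subset
    fun p ⟨⟨ha₀, ha₁⟩, hb₀, hb₁⟩ ↦ ?_
  rw [mem_closedBall, ← pow_le_pow_iff_left₀ dist_nonneg (by linarith) two_ne_zero,
    EuclideanSpace.dist_sq_eq_fin_two]
  simp only [Matrix.cons_val_zero, Matrix.cons_val_one]
  nlinarith

lemma sq_le_of_diam_square_le {a b h ρ : ℝ} {c : EuclideanSpace ℝ (Fin 2)} (hh : 0 ≤ h)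
    (hρ : 0 ≤ ρ) (hdiam : diam (square a b h) ≤ 2 * diam (closedBall c ρ)) :
    h ^ 2 ≤ 8 * ρ ^ 2 := by
  have hcorner₀ : !₂[a, b] ∈ square a b h := by simp [square, hh]
  have hcorner₁ : !₂[a + h, b + h] ∈ square a b h := by simp [square, hh]
  have hdist : dist !₂[a, b] !₂[a + h, b + h] ≤ 4 * ρ :=
    calc _ ≤ diam (square a b h) := dist_le_diam_of_mem (isBounded_square a b h) hcorner₀ hcorner₁
      _ ≤ 2 * diam (closedBall c ρ) := hdiam
      _ ≤ 4 * ρ := by linarith [diam_closedBall (x := c) hρ]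
  have hdiag : dist !₂[a, b] !₂[a + h, b + h] ^ 2 = 2 * h ^ 2 := by
    rw [EuclideanSpace.dist_sq_eq_fin_two]
    simp only [Matrix.cons_val_zero, Matrix.cons_val_one]
    ring
  nlinarith [pow_le_pow_left₀ dist_nonneg hdist 2]

lemma exists_sentinel_coord {a h q : ℝ} (hh : 0 < h) (hq : q ∈ Set.Icc a (a + h)) (c : ℝ) :
    ∃ i : ℤ, i ∈ Set.Icc (-1) 3 ∧
      (a + i * (h / 2) - c) ^ 2 ≤ max (h ^ 2 / 16) ((q - c) ^ 2 - h ^ 2 / 4) := by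
  obtain ⟨hqa, hqb⟩ := hq
  rcases le_or_gt c (a - 3 * h / 4) with hc | hc
  · refine ⟨-1, by norm_num, le_max_of_le_right ?_⟩
    push_cast
    nlinarith
  rcases le_or_gt (a + 7 * h / 4) c with hc' | hc'
  · refine ⟨3, by norm_num, le_max_of_le_right ?_⟩
    push_cast
    nlinarith
  set x := (c - a) / (h / 2) with hx
  have hcx : c = a + x * (h / 2) := by rw [hx]; field_simp; ring
  obtain ⟨hr₁, hr₂⟩ := abs_le.mp (abs_sub_round x)
  have hx₁ : -3 / 2 < x := by rw [hx, lt_div_iff₀ (by positivity)]; linarith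
  have hx₂ : x < 7 / 2 := by rw [hx, div_lt_iff₀ (by positivity)]; linarith
  have hi₁ : (-2 : ℤ) < round x := by exact_mod_cast (by linarith : (-2 : ℝ) < round x)
  have hi₂ : round x < (4 : ℤ) := by exact_mod_cast (by linarith : (round x : ℝ) < 4)
  refine ⟨round x, ⟨by omega, by omega⟩, le_max_of_le_left ?_⟩
  have hsq : (x - round x) ^ 2 ≤ (1 / 2) ^ 2 := sq_le_sq' (by linarith) (by linarith)
  calc (a + round x * (h / 2) - c) ^ 2 = (x - round x) ^ 2 * (h / 2) ^ 2 := by rw [hcx]; ring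
    _ ≤ (1 / 2) ^ 2 * (h / 2) ^ 2 := by gcongr
    _ = h ^ 2 / 16 := by ring

theorem stmt_7_general (c : EuclideanSpace ℝ (Fin 2)) (ρ a b h : ℝ)
    (hh : 0 < h)
    (hint : (closedBall c ρ ∩ square a b h).Nonempty)
    (hdiam : diam (square a b h) ≤ 2 * diam (closedBall c ρ)) :
    ∃ p ∈ closedBall c ρ, ∃ i j : ℤ,
      -1 ≤ i ∧ i ≤ 3 ∧ -1 ≤ j ∧ j ≤ 3 ∧
      p 0 = a + i * (h / 2) ∧ p 1 = b + j * (h / 2) := by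
  obtain ⟨q, hqD, hq₀, hq₁⟩ := hint
  have hρ : 0 ≤ ρ := dist_nonneg.trans hqD
  have hh8 := sq_le_of_diam_square_le hh.le hρ hdiam
  have hqc : (q 0 - c 0) ^ 2 + (q 1 - c 1) ^ 2 ≤ ρ ^ 2 := by
    rw [← EuclideanSpace.dist_sq_eq_fin_two]; exact pow_le_pow_left₀ dist_nonneg hqD 2
  obtain ⟨i, hi, hic⟩ := exists_sentinel_coord hh hq₀ (c 0)
  obtain ⟨j, hj, hjc⟩ := exists_sentinel_coord hh hq₁ (c 1)
  refine ⟨!₂[a + i * (h / 2), b + j * (h / 2)], ?_, i, j, hi.1, hi.2, hj.1, hj.2, rfl, rfl⟩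
  rw [mem_closedBall, ← pow_le_pow_iff_left₀ dist_nonneg hρ two_ne_zero,
    EuclideanSpace.dist_sq_eq_fin_two]
  simp only [Matrix.cons_val_zero, Matrix.cons_val_one]
  rcases max_cases (h ^ 2 / 16) ((q 0 - c 0) ^ 2 - h ^ 2 / 4) with ⟨hm₀, -⟩ | ⟨hm₀, -⟩ <;>
  rcases max_cases (h ^ 2 / 16) ((q 1 - c 1) ^ 2 - h ^ 2 / 4) with ⟨hm₁, -⟩ | ⟨hm₁, -⟩ <;>
  nlinarith [sq_nonneg (q 0 - c 0), sq_nonneg (q 1 - c 1)]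

/-- If a closed disk D intersects the square Q = [a,a+h] × [b,b+h]
and diam(Q) ≤ 2·diam(D), then D contains one of the 25 sentinel points
(a + i·h/2, b + j·h/2), i, j ∈ {-1,0,1,2,3}. -/
theorem stmt_7 (c : EuclideanSpace ℝ (Fin 2)) (ρ a b h : ℝ)
    (hρ : 0 < ρ) (hh : 0 < h)
    (hint : (closedBall c ρ ∩ square a b h).Nonempty)
    (hdiam : diam (square a b h) ≤ 2 * diam (closedBall c ρ)) :
    ∃ p ∈ closedBall c ρ, ∃ i j : ℤ,
      -1 ≤ i ∧ i ≤ 3 ∧ -1 ≤ j ∧ j ≤ 3 ∧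
      p 0 = a + i * (h / 2) ∧ p 1 = b + j * (h / 2) :=
  stmt_7_general c ρ a b h hh hint hdiam
end

section
/- A closed axis-aligned square Q of side length h in ℝ² can be adjacent to (i.e., share at least a boundary point with) at most 12 interior-disjoint closed axis-aligned squares whose side lengths are all in [h/2, 2h], assuming all squares come from a subdivision where any two squares have disjoint interiors. -/
open Metric MeasureTheory ENNReal

/-- The coordinate homeomorphism from the Euclidean plane to `ℝ × ℝ`. -/
noncomputable def ee : EuclideanSpace ℝ (Fin 2) ≃ₜ ℝ × ℝ :=
  (PiLp.continuousLinearEquiv 2 ℝ (fun _ : Fin 2 => ℝ)).toHomeomorph.trans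
    (Homeomorph.piFinTwo (fun _ => ℝ))

lemma square_eq (a b h : ℝ) :
    square a b h = ee ⁻¹' (Set.Icc a (a+h) ×ˢ Set.Icc b (b+h)) := rfl

lemma interior_square (a b h : ℝ) :
    interior (square a b h) = ee ⁻¹' (Set.Ioo a (a+h) ×ˢ Set.Ioo b (b+h)) := by
  rw [square_eq, ← Homeomorph.preimage_interior, interior_prod_eq, interior_Icc, interior_Icc]

lemma image_interior_square (a b h : ℝ) :
    ee '' interior (square a b h) = Set.Ioo a (a+h) ×ˢ Set.Ioo b (b+h) := by
  rw [interior_square, Set.image_preimage_eq _ ee.surjective]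

open MeasureTheory in
lemma vol_prod_Ioo (u v w z : ℝ) :
    volume (Set.Ioo u v ×ˢ Set.Ioo w z) = ENNReal.ofReal (v - u) * ENNReal.ofReal (z - w) := by
  rw [Measure.volume_eq_prod, Measure.prod_prod, Real.volume_Ioo, Real.volume_Ioo]

/-- A closed square Q of side h can be adjacent to at most 12
interior-disjoint closed squares, each with side length in [h/2, 2h], each with
interior disjoint from Q's interior, and each touching Q. -/
theorem stmt_11 (a b h : ℝ) (hh : 0 < h) (F : Finset (ℝ × ℝ × ℝ))
    (hside : ∀ t ∈ F, h / 2 ≤ t.2.2 ∧ t.2.2 ≤ 2 * h)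
    (hpair : ∀ t ∈ F, ∀ t' ∈ F, t ≠ t' →
      Disjoint (interior (square t.1 t.2.1 t.2.2)) (interior (square t'.1 t'.2.1 t'.2.2)))
    (hQdisj : ∀ t ∈ F, Disjoint (interior (square t.1 t.2.1 t.2.2)) (interior (square a b h)))
    (htouch : ∀ t ∈ F, (square t.1 t.2.1 t.2.2 ∩ square a b h).Nonempty) :
    F.card ≤ 12 := by
  classical
  -- For each square in F, find a sub-square of side h/2 inside it, contained in the
  -- frame box B = [a-h/2, a+3h/2] × [b-h/2, b+3h/2].
  have key : ∀ t ∈ F, ∃ u v : ℝ,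
      (Set.Ioo u (u + h/2) ×ˢ Set.Ioo v (v + h/2) ⊆ ee '' interior (square t.1 t.2.1 t.2.2)) ∧
      a - h/2 ≤ u ∧ u ≤ a + h ∧ b - h/2 ≤ v ∧ v ≤ b + h := by
    intro t ht
    obtain ⟨hs1, _⟩ := hside t ht
    obtain ⟨p, hpS, hpQ⟩ := htouch t ht
    obtain ⟨⟨hx1, hx2⟩, ⟨hy1, hy2⟩⟩ := hpS
    obtain ⟨⟨ha1, ha2⟩, ⟨hb1, hb2⟩⟩ := hpQ
    refine ⟨max t.1 (p 0 - h/2), max t.2.1 (p 1 - h/2), ?_, ?_, ?_, ?_, ?_⟩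
    · rw [image_interior_square]
      apply Set.prod_mono
      · refine Set.Ioo_subset_Ioo (le_max_left _ _) ?_
        have := max_le (show t.1 ≤ t.1 + t.2.2 - h/2 by linarith)
          (show p 0 - h/2 ≤ t.1 + t.2.2 - h/2 by linarith)
        linarith
      · refine Set.Ioo_subset_Ioo (le_max_left _ _) ?_
        have := max_le (show t.2.1 ≤ t.2.1 + t.2.2 - h/2 by linarith)
          (show p 1 - h/2 ≤ t.2.1 + t.2.2 - h/2 by linarith)
        linarith
    · exact le_trans (by linarith) (le_max_right _ _)
    · exact max_le (by linarith) (by linarith)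
    · exact le_trans (by linarith) (le_max_right _ _)
    · exact max_le (by linarith) (by linarith)
  choose! u v hsub hu1 hu2 hv1 hv2 using key
  set R : ℝ × ℝ × ℝ → Set (ℝ × ℝ) :=
    fun t => Set.Ioo (u t) (u t + h/2) ×ˢ Set.Ioo (v t) (v t + h/2) with hR
  -- the sub-squares are pairwise disjoint
  have hdisjR : (↑F : Set (ℝ × ℝ × ℝ)).Pairwise (Function.onFun Disjoint R) := by
    intro t ht t' ht' hne
    have h1 := hsub t ht
    have h2 := hsub t' ht'
    have hd := hpair t ht t' ht' hne
    have hd' : Disjoint (ee '' interior (square t.1 t.2.1 t.2.2))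
        (ee '' interior (square t'.1 t'.2.1 t'.2.2)) :=
      (Set.disjoint_image_iff ee.injective).2 hd
    exact (hd'.mono h1 h2)
  -- each sub-square lies in the frame annulus
  set Q' : Set (ℝ × ℝ) := Set.Ioo a (a+h) ×ˢ Set.Ioo b (b+h) with hQ'
  set B : Set (ℝ × ℝ) := Set.Icc (a - h/2) (a + 3*h/2) ×ˢ Set.Icc (b - h/2) (b + 3*h/2) with hB
  have hRsub : ∀ t ∈ F, R t ⊆ B \ Q' := by
    intro t ht
    intro p hp
    constructor
    · obtain ⟨hp1, hp2⟩ := hp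
      constructor
      · exact ⟨le_trans (hu1 t ht) (le_of_lt hp1.1), le_trans (le_of_lt hp1.2) (by linarith [hu2 t ht])⟩
      · exact ⟨le_trans (hv1 t ht) (le_of_lt hp2.1), le_trans (le_of_lt hp2.2) (by linarith [hv2 t ht])⟩
    · intro hpQ
      have h1 := hsub t ht hp
      have hd := hQdisj t ht
      have hd' : Disjoint (ee '' interior (square t.1 t.2.1 t.2.2))
          (ee '' interior (square a b h)) :=
        (Set.disjoint_image_iff ee.injective).2 hd
      rw [image_interior_square a b h, ← hQ'] at hd'
      exact Set.disjoint_left.1 hd' h1 hpQ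
  -- measure computation
  have hmeas : ∀ t ∈ F, MeasurableSet (R t) :=
    fun t _ => measurableSet_Ioo.prod measurableSet_Ioo
  have hsum : ∑ t ∈ F, volume (R t) = volume (⋃ t ∈ F, R t) :=
    (measure_biUnion_finset hdisjR hmeas).symm
  have hunion : (⋃ t ∈ F, R t) ⊆ B \ Q' := Set.iUnion₂_subset hRsub
  have hvolR : ∀ t ∈ F, volume (R t) = ENNReal.ofReal (h/2) * ENNReal.ofReal (h/2) := by
    intro t _
    rw [hR]
    simp only
    rw [vol_prod_Ioo, add_sub_cancel_left, add_sub_cancel_left]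
  have hQ'B : Q' ⊆ B := by
    apply Set.prod_mono
    · exact le_trans Set.Ioo_subset_Icc_self (Set.Icc_subset_Icc (by linarith) (by linarith))
    · exact le_trans Set.Ioo_subset_Icc_self (Set.Icc_subset_Icc (by linarith) (by linarith))
  have hvolQ' : volume Q' = ENNReal.ofReal h * ENNReal.ofReal h := by
    rw [hQ', vol_prod_Ioo, add_sub_cancel_left, add_sub_cancel_left]
  have hvolB : volume B = ENNReal.ofReal (2*h) * ENNReal.ofReal (2*h) := by
    rw [hB, Measure.volume_eq_prod, Measure.prod_prod, Real.volume_Icc, Real.volume_Icc,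
      show a + 3*h/2 - (a - h/2) = 2*h by ring, show b + 3*h/2 - (b - h/2) = 2*h by ring]
  have hvoldiff : volume (B \ Q') = ENNReal.ofReal (3 * h^2) := by
    rw [measure_diff hQ'B (measurableSet_Ioo.prod measurableSet_Ioo).nullMeasurableSet
      (by rw [hvolQ']; exact ENNReal.mul_ne_top ENNReal.ofReal_ne_top ENNReal.ofReal_ne_top),
      hvolB, hvolQ', ← ENNReal.ofReal_mul (by linarith), ← ENNReal.ofReal_mul hh.le,
      ← ENNReal.ofReal_sub _ (by nlinarith)]
    congr 1; ring
  have hfinal : (F.card : ℝ≥0∞) * ENNReal.ofReal (h/2 * (h/2)) ≤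
      (12 : ℝ≥0∞) * ENNReal.ofReal (h/2 * (h/2)) := by
    have h1 : ∑ t ∈ F, volume (R t) = (F.card : ℝ≥0∞) * ENNReal.ofReal (h/2 * (h/2)) := by
      rw [Finset.sum_congr rfl hvolR, Finset.sum_const, nsmul_eq_mul,
        ENNReal.ofReal_mul (by linarith)]
    have h2 : (12 : ℝ≥0∞) * ENNReal.ofReal (h/2 * (h/2)) = ENNReal.ofReal (3 * h^2) := by
      rw [show (12 : ℝ≥0∞) = ENNReal.ofReal 12 by norm_num,
        ← ENNReal.ofReal_mul (by norm_num)]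
      congr 1; ring
    rw [← h1, h2, ← hvoldiff, hsum]
    exact measure_mono hunion
  have hpos : ENNReal.ofReal (h/2 * (h/2)) ≠ 0 :=
    (ENNReal.ofReal_pos.2 (by nlinarith)).ne'
  have := (ENNReal.mul_le_mul_iff_left hpos ENNReal.ofReal_ne_top).1 hfinal
  exact_mod_cast this
end

section
/- Consequence of greedy selection: With S, I as in the greedy construction, if G is a set intersecting every disk in I, then for every D ∈ S, dist(D, G) ≤ diam(D). -/
open Metric

noncomputable def sdist (A B : Set (EuclideanSpace ℝ (Fin 2))) : ℝ :=
  sInf {d | ∃ a ∈ A, ∃ b ∈ B, d = dist a b}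

lemma sdist_le_dist {A B : Set (EuclideanSpace ℝ (Fin 2))} {a b : EuclideanSpace ℝ (Fin 2)}
    (ha : a ∈ A) (hb : b ∈ B) : sdist A B ≤ dist a b := by
  apply csInf_le
  · exact ⟨0, fun d ⟨x, _, y, _, hd⟩ => hd ▸ dist_nonneg⟩
  · exact ⟨a, ha, b, hb, rfl⟩

/-- If every disk of S not in I intersects some disk of I of
smaller or equal radius, and G meets every disk of I, then every disk D ∈ S
satisfies dist(D, G) ≤ diam(D). -/
theorem stmt_17 (S I : Finset (EuclideanSpace ℝ (Fin 2) × ℝ))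
    (hIS : I ⊆ S) (hrad : ∀ D ∈ S, 0 ≤ D.2)
    (hgreedy : ∀ D ∈ S, D ∉ I →
      ∃ D' ∈ I, (closedBall D.1 D.2 ∩ closedBall D'.1 D'.2).Nonempty ∧ D'.2 ≤ D.2)
    (G : Set (EuclideanSpace ℝ (Fin 2))) (hG : G.Nonempty)
    (hhit : ∀ D' ∈ I, (G ∩ closedBall D'.1 D'.2).Nonempty) :
    ∀ D ∈ S, sdist (closedBall D.1 D.2) G ≤ diam (closedBall D.1 D.2) := by
  intro D hD
  have hr := hrad D hD
  set v : EuclideanSpace ℝ (Fin 2) := EuclideanSpace.single 0 1 with hv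
  have hnv : ‖v‖ = 1 := by simp [hv]
  have hdiam : 2 * D.2 ≤ diam (closedBall D.1 D.2) := by
    have hp : D.1 + D.2 • v ∈ closedBall D.1 D.2 := by
      simp [mem_closedBall, dist_eq_norm, norm_smul, hnv, abs_of_nonneg hr]
    have hq : D.1 - D.2 • v ∈ closedBall D.1 D.2 := by
      simp [mem_closedBall, dist_eq_norm, norm_smul, hnv, abs_of_nonneg hr]
    have := dist_le_diam_of_mem (isBounded_closedBall) hp hq
    have hdist : dist (D.1 + D.2 • v) (D.1 - D.2 • v) = 2 * D.2 := by
      rw [dist_eq_norm]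
      have : D.1 + D.2 • v - (D.1 - D.2 • v) = (2 * D.2) • v := by
        module
      rw [this, norm_smul, hnv]
      simp [abs_of_nonneg, hr, mul_nonneg]
    linarith [this, hdist ▸ this]
  refine le_trans ?_ hdiam
  by_cases hDI : D ∈ I
  · obtain ⟨g, hgG, hgD⟩ := hhit D hDI
    calc sdist (closedBall D.1 D.2) G ≤ dist g g := sdist_le_dist hgD hgG
    _ = 0 := dist_self g
    _ ≤ 2 * D.2 := by linarith [hrad D hD]
  · obtain ⟨D', hD'I, ⟨x, hxD, hxD'⟩, hle⟩ := hgreedy D hD hDI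
    obtain ⟨g, hgG, hgD'⟩ := hhit D' hD'I
    calc sdist (closedBall D.1 D.2) G ≤ dist x g := sdist_le_dist hxD hgG
    _ ≤ dist x D'.1 + dist D'.1 g := dist_triangle _ _ _
    _ ≤ D'.2 + D'.2 := by
        have h1 := mem_closedBall.mp hxD'
        have h2 := mem_closedBall.mp hgD'
        rw [dist_comm] at h2
        linarith
    _ ≤ 2 * D.2 := by linarith
end

section
/- Any point p ∈ ℝ² is contained in at most 4 squares of a family of closed axis-aligned squares with pairwise disjoint interiors. -/
/-!
From a point `p` of a square, moving diagonally by a small `ε > 0` towards the inside of the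
square (to the right unless `p` is on the right edge, up unless `p` is on the top edge) lands in
the open square. Two squares containing `p` with the same inward diagonal direction therefore
share interior points, so squares with disjoint interiors containing `p` have pairwise distinct
directions, of which there are only four.
-/

open Metric Classical

open Filter Set Topology

/-- For `x ∈ [a, b]`, the direction in which `x` moves into `(a, b)`. -/
noncomputable def inwardDir (x b : ℝ) : ℝ := if x < b then 1 else -1

lemma inwardDir_mem (x b : ℝ) : inwardDir x b ∈ ({1, -1} : Finset ℝ) := by
  unfold inwardDir
  split_ifs <;> simp

lemma eventually_add_inwardDir_mem_Ioo {a b x : ℝ} (hab : a < b) (hx : x ∈ Icc a b) :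
    ∀ᶠ ε in 𝓝[>] 0, x + ε * inwardDir x b ∈ Ioo a b := by
  unfold inwardDir
  split_ifs with hxb
  · filter_upwards [Ioo_mem_nhdsGT (sub_pos.2 hxb)] with ε ⟨hε, hεb⟩
    constructor <;> linarith [hx.1]
  · have hxb : x = b := le_antisymm hx.2 (not_lt.1 hxb)
    filter_upwards [Ioo_mem_nhdsGT (sub_pos.2 hab)] with ε ⟨hε, hεb⟩
    constructor <;> linarith

lemma setOf_mem_Ioo_subset_interior_square (a b h : ℝ) :
    {q : EuclideanSpace ℝ (Fin 2) | q 0 ∈ Ioo a (a + h) ∧ q 1 ∈ Ioo b (b + h)}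
      ⊆ interior (square a b h) :=
  interior_maximal (fun _ hq => ⟨Ioo_subset_Icc_self hq.1, Ioo_subset_Icc_self hq.2⟩)
    ((isOpen_Ioo.preimage (by fun_prop)).inter (isOpen_Ioo.preimage (by fun_prop)))

noncomputable def squareInwardDir (p : EuclideanSpace ℝ (Fin 2)) (a b h : ℝ) : ℝ × ℝ :=
  (inwardDir (p 0) (a + h), inwardDir (p 1) (b + h))

lemma eventually_mem_interior_square {a b h : ℝ} (hh : 0 < h) {p : EuclideanSpace ℝ (Fin 2)}
    (hp : p ∈ square a b h) :
    ∀ᶠ ε in 𝓝[>] 0, !₂[p 0 + ε * (squareInwardDir p a b h).1,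
      p 1 + ε * (squareInwardDir p a b h).2] ∈ interior (square a b h) := by
  filter_upwards [eventually_add_inwardDir_mem_Ioo (by linarith) hp.1,
    eventually_add_inwardDir_mem_Ioo (by linarith) hp.2] with ε hx hy
  exact setOf_mem_Ioo_subset_interior_square a b h
    ⟨by simpa [squareInwardDir] using hx, by simpa [squareInwardDir] using hy⟩

lemma squareInwardDir_ne_of_disjoint_interior {a b h a' b' h' : ℝ} (hh : 0 < h)
    (hh' : 0 < h') {p : EuclideanSpace ℝ (Fin 2)} (hp : p ∈ square a b h)
    (hp' : p ∈ square a' b' h')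
    (hdisj : Disjoint (interior (square a b h)) (interior (square a' b' h'))) :
    squareInwardDir p a b h ≠ squareInwardDir p a' b' h' := by
  intro hdir
  obtain ⟨ε, hq, hq'⟩ :=
    ((eventually_mem_interior_square hh hp).and (eventually_mem_interior_square hh' hp')).exists
  rw [hdir] at hq
  exact disjoint_left.1 hdisj hq hq'

/-- Any point of the plane lies in at most 4 squares of a family
of closed axis-aligned squares (of positive side length) with pairwise disjoint
interiors. -/
theorem stmt_18 (F : Finset (ℝ × ℝ × ℝ))
    (hpos : ∀ t ∈ F, 0 < t.2.2)
    (hpair : ∀ t ∈ F, ∀ t' ∈ F, t ≠ t' →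
      Disjoint (interior (square t.1 t.2.1 t.2.2)) (interior (square t'.1 t'.2.1 t'.2.2)))
    (p : EuclideanSpace ℝ (Fin 2)) :
    (F.filter (fun t : ℝ × ℝ × ℝ => p ∈ square t.1 t.2.1 t.2.2)).card ≤ 4 := by
  have hdirs : (({1, -1} : Finset ℝ) ×ˢ ({1, -1} : Finset ℝ)).card = 4 := by
    rw [Finset.card_product, Finset.card_pair (by norm_num)]
  refine hdirs ▸ Finset.card_le_card_of_injOn (fun t => squareInwardDir p t.1 t.2.1 t.2.2)
    (fun t _ => Finset.mem_product.2 ⟨inwardDir_mem _ _, inwardDir_mem _ _⟩) ?_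
  intro t ht t' ht' hdir
  simp only [Finset.coe_filter, mem_ofPred_eq] at ht ht'
  by_contra hne
  exact squareInwardDir_ne_of_disjoint_interior (hpos t ht.1) (hpos t' ht'.1) ht.2 ht'.2
    (hpair t ht.1 t' ht'.1 hne) hdir
end
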